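/- Let H be a finite-dimensional complex Hilbert space and, for i ∈ {1,2,3}, let A_{i,0} and A_{i,1} be binary observables on H (self-adjoint with square the identity); write X^{(a)} := (I+(−1)^a X)/2 and X^a for the a-th power. Define the swap isometry V_S : H → (ℂ²)^{⊗3} ⊗ H by V_S = Σ_{a,b,c∈{0,1}} |a,b,c⟩ ⊗ [A_{3,1}^c A_{3,0}^{(c)} A_{2,1}^b A_{2,0}^{(b)} A_{1,1}^a A_{1,0}^{(a)}]. Then the following six conjugation identities hold, where σ_{W,i} denotes the Pauli-W operator on the i-th qubit factor of (ℂ²)^{⊗3} tensored with the identity on H: (i) V_S†σ_{Z,1}V_S = A_{1,0}; (ii) V_S†σ_{Z,2}V_S = Σ_a A_{1,0}^{(a)} A_{1,1}^a A_{2,0} A_{1,1}^a A_{1,0}^{(a)}; (iii) V_S†σ_{Z,3}V_S = Σ_{a,b} A_{1,0}^{(a)} A_{1,1}^a A_{2,0}^{(b)} A_{2,1}^b A_{3,0} A_{2,1}^b A_{2,0}^{(b)} A_{1,1}^a A_{1,0}^{(a)}; (iv) V_S†σ_{X,1}V_S = Σ_a A_{1,0}^{(a⊕1)} A_{1,1}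 A_{1,0}^{(a)}; (v) V_S†σ_{X,2}V_S = Σ_{a,b} A_{1,0}^{(a)} A_{1,1}^a A_{2,0}^{(b)} A_{2,1} A_{2,0}^{(b⊕1)} A_{1,1}^a A_{1,0}^{(a)}; (vi) V_S†σ_{X,3}V_S = Σ_{a,b,c} A_{1,0}^{(a)} A_{1,1}^a A_{2,0}^{(b)} A_{2,1}^b A_{3,0}^{(c⊕1)} A_{3,1} A_{3,0}^{(c)} A_{2,1}^b A_{2,0}^{(b)} A_{1,1}^a A_{1,0}^{(a)}. -/

import Mathlib

open Matrix Kronecker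

noncomputable section

/-- Three-qubit index type. -/
abbrev Q3 := Fin 2 × Fin 2 × Fin 2

/-- Pauli `Z`. -/
def sZ : Matrix (Fin 2) (Fin 2) ℂ := !![1, 0; 0, -1]

/-- Pauli `X`. -/
def sX : Matrix (Fin 2) (Fin 2) ℂ := !![0, 1; 1, 0]

/-- `A^{(b)} := (I+(−1)^b A)/2`, the projector onto the `(−1)^b`-eigenspace of a binary
observable `A`. -/
def pproj {m : Type*} [Fintype m] [DecidableEq m] (A : Matrix m m ℂ) (b : Fin 2) :
    Matrix m m ℂ :=
  (2 : ℂ)⁻¹ • (1 + ((-1 : ℂ) ^ b.val) • A)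

/-- The computational basis state `|a,b,c⟩` of three qubits. -/
def ket3 (a b c : Fin 2) : Q3 → ℂ := fun p => if p = (a, b, c) then 1 else 0

/-- `|v⟩ ⊗ M`, as an operator from `H` to `ℂ^{Q3} ⊗ H`. -/
def ketTensor {ι : Type*} (v : Q3 → ℂ) (M : Matrix ι ι ℂ) : Matrix (Q3 × ι) ι ℂ :=
  fun p j => v p.1 * M p.2 j

/-- The swap isometry
`V_S = Σ_{a,b,c} |a,b,c⟩ ⊗ [A_{3,1}^c A_{3,0}^{(c)} A_{2,1}^b A_{2,0}^{(b)} A_{1,1}^a A_{1,0}^{(a)}]`. -/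
def swapIso {ι : Type*} [Fintype ι] [DecidableEq ι]
    (A10 A11 A20 A21 A30 A31 : Matrix ι ι ℂ) : Matrix (Q3 × ι) ι ℂ :=
  ∑ a : Fin 2, ∑ b : Fin 2, ∑ c : Fin 2,
    ketTensor (ket3 a b c)
      (A31 ^ c.val * pproj A30 c * A21 ^ b.val * pproj A20 b * A11 ^ a.val * pproj A10 a)

/-- A single-qubit operator `W` on the `i`-th qubit factor of `(ℂ²)^{⊗3}`, tensored with the
identity on `H`. -/
def lift1 {ι : Type*} [Fintype ι] [DecidableEq ι] (W : Matrix (Fin 2) (Fin 2) ℂ) (i : Fin 3) :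
    Matrix (Q3 × ι) (Q3 × ι) ℂ :=
  (if i = 0 then W ⊗ₖ ((1 : Matrix (Fin 2) (Fin 2) ℂ) ⊗ₖ (1 : Matrix (Fin 2) (Fin 2) ℂ))
   else if i = 1 then (1 : Matrix (Fin 2) (Fin 2) ℂ) ⊗ₖ (W ⊗ₖ (1 : Matrix (Fin 2) (Fin 2) ℂ))
   else (1 : Matrix (Fin 2) (Fin 2) ℂ) ⊗ₖ ((1 : Matrix (Fin 2) (Fin 2) ℂ) ⊗ₖ W))
    ⊗ₖ (1 : Matrix ι ι ℂ)

section AUX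
variable {ι : Type*} [Fintype ι] [DecidableEq ι]

/-- `⟨v| W |w⟩`. -/
def braOpKet (v w : Q3 → ℂ) (W : Matrix Q3 Q3 ℂ) : ℂ :=
  ∑ q : Q3, (∑ p : Q3, star (v p) * W p q) * w q

lemma braOpKet_ket3 (a b c a' b' c' : Fin 2) (W : Matrix Q3 Q3 ℂ) :
    braOpKet (ket3 a b c) (ket3 a' b' c') W = W (a, b, c) (a', b', c') := by
  simp [braOpKet, ket3, apply_ite (star : ℂ → ℂ)]

lemma ketTensor_sand1 (v w : Q3 → ℂ) (W : Matrix Q3 Q3 ℂ) :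
    (ketTensor v (1 : Matrix ι ι ℂ))ᴴ * (W ⊗ₖ (1 : Matrix ι ι ℂ)) * ketTensor w (1 : Matrix ι ι ℂ)
      = braOpKet v w W • (1 : Matrix ι ι ℂ) := by
  ext i j
  simp only [Matrix.mul_apply, conjTranspose_apply, ketTensor, kroneckerMap_apply,
    Matrix.smul_apply, braOpKet, Pi.star_apply, smul_eq_mul, Matrix.one_apply,
    Fintype.sum_prod_type, star_mul', apply_ite (star : ℂ → ℂ), star_one, star_zero,
    mul_ite, ite_mul, mul_zero, zero_mul, mul_one, one_mul, Finset.sum_ite_irrel,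
    Finset.sum_const_zero, Finset.sum_ite_eq, Finset.sum_ite_eq', Finset.mem_univ, if_true]
  simp [eq_comm]

lemma ketTensor_eq (v : Q3 → ℂ) (M : Matrix ι ι ℂ) :
    ketTensor v M = ketTensor v (1 : Matrix ι ι ℂ) * M := by
  ext p j
  simp [ketTensor, Matrix.mul_apply, Matrix.one_apply, ite_mul]

lemma ketTensor_sandwich (v w : Q3 → ℂ) (M P : Matrix ι ι ℂ) (W : Matrix Q3 Q3 ℂ) :
    (ketTensor v M)ᴴ * (W ⊗ₖ (1 : Matrix ι ι ℂ)) * ketTensor w P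
      = braOpKet v w W • (Mᴴ * P) := by
  have h := ketTensor_sand1 (ι := ι) v w W
  rw [ketTensor_eq v M, ketTensor_eq w P, conjTranspose_mul]
  simp only [Matrix.mul_assoc] at h ⊢
  rw [← Matrix.mul_assoc (W ⊗ₖ 1) (ketTensor w 1) P, ← Matrix.mul_assoc _ _ P, h]
  simp [Matrix.smul_mul, Matrix.mul_smul, Matrix.mul_assoc]

/-- abbreviation for the summand operators in `swapIso`. -/
def Msw (A10 A11 A20 A21 A30 A31 : Matrix ι ι ℂ) (a b c : Fin 2) : Matrix ι ι ℂ :=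
  A31 ^ c.val * pproj A30 c * A21 ^ b.val * pproj A20 b * A11 ^ a.val * pproj A10 a

def mid (A B : Matrix ι ι ℂ) (W : Matrix (Fin 2) (Fin 2) ℂ) (X : Matrix ι ι ℂ) :
    Matrix ι ι ℂ :=
  ∑ b : Fin 2, ∑ b' : Fin 2,
    W b b' • (pproj A b * B ^ b.val * X * B ^ b'.val * pproj A b')

variable (A10 A11 A20 A21 A30 A31 : Matrix ι ι ℂ)

lemma key (W1 W2 W3 : Matrix (Fin 2) (Fin 2) ℂ) :
    (swapIso A10 A11 A20 A21 A30 A31)ᴴ * ((W1 ⊗ₖ (W2 ⊗ₖ W3)) ⊗ₖ (1 : Matrix ι ι ℂ)) *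
        swapIso A10 A11 A20 A21 A30 A31
      = ∑ a' : Fin 2, ∑ b' : Fin 2, ∑ c' : Fin 2, ∑ a : Fin 2, ∑ b : Fin 2, ∑ c : Fin 2,
          (W1 a a' * (W2 b b' * W3 c c')) •
            ((Msw A10 A11 A20 A21 A30 A31 a b c)ᴴ * Msw A10 A11 A20 A21 A30 A31 a' b' c') := by
  have hsw : swapIso A10 A11 A20 A21 A30 A31
      = ∑ a : Fin 2, ∑ b : Fin 2, ∑ c : Fin 2,
          ketTensor (ket3 a b c) (Msw A10 A11 A20 A21 A30 A31 a b c) := rfl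
  rw [hsw]
  simp only [conjTranspose_sum, Matrix.sum_mul, Matrix.mul_sum]
  refine Finset.sum_congr rfl fun a' _ => Finset.sum_congr rfl fun b' _ =>
    Finset.sum_congr rfl fun c' _ => Finset.sum_congr rfl fun a _ =>
    Finset.sum_congr rfl fun b _ => Finset.sum_congr rfl fun c _ => ?_
  rw [show (ketTensor (ket3 a b c) (Msw A10 A11 A20 A21 A30 A31 a b c))ᴴ *
      ((W1 ⊗ₖ (W2 ⊗ₖ W3)) ⊗ₖ (1 : Matrix ι ι ℂ)) *
      ketTensor (ket3 a' b' c') (Msw A10 A11 A20 A21 A30 A31 a' b' c')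
      = braOpKet (ket3 a b c) (ket3 a' b' c') (W1 ⊗ₖ (W2 ⊗ₖ W3)) •
          ((Msw A10 A11 A20 A21 A30 A31 a b c)ᴴ * Msw A10 A11 A20 A21 A30 A31 a' b' c') from
    ketTensor_sandwich _ _ _ _ _]
  rw [braOpKet_ket3]
  simp [kroneckerMap_apply]


lemma reorder6 {M : Type*} [AddCommMonoid M] (f : Fin 2 → Fin 2 → Fin 2 → Fin 2 → Fin 2 → Fin 2 → M) :
    (∑ a' : Fin 2, ∑ b' : Fin 2, ∑ c' : Fin 2, ∑ a : Fin 2, ∑ b : Fin 2, ∑ c : Fin 2,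
        f a b c a' b' c')
      = ∑ a : Fin 2, ∑ a' : Fin 2, ∑ b : Fin 2, ∑ b' : Fin 2, ∑ c : Fin 2, ∑ c' : Fin 2,
        f a b c a' b' c' := by
  simp only [Fin.sum_univ_two]
  abel

variable {A10 A11 A20 A21 A30 A31}

lemma pproj_herm {A : Matrix ι ι ℂ} (hA : A.IsHermitian) (b : Fin 2) :
    (pproj A b)ᴴ = pproj A b := by
  simp [pproj, hA.eq, conjTranspose_smul, star_pow]

lemma regroup (h10 : A10.IsHermitian) (h11 : A11.IsHermitian) (h20 : A20.IsHermitian)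
    (h21 : A21.IsHermitian) (h30 : A30.IsHermitian) (h31 : A31.IsHermitian)
    (W1 W2 W3 : Matrix (Fin 2) (Fin 2) ℂ) :
    (∑ a : Fin 2, ∑ a' : Fin 2, ∑ b : Fin 2, ∑ b' : Fin 2, ∑ c : Fin 2, ∑ c' : Fin 2,
        (W1 a a' * (W2 b b' * W3 c c')) •
          ((Msw A10 A11 A20 A21 A30 A31 a b c)ᴴ * Msw A10 A11 A20 A21 A30 A31 a' b' c'))
      = mid A10 A11 W1 (mid A20 A21 W2 (mid A30 A31 W3 1)) := by
  simp only [mid, Finset.smul_sum, Matrix.mul_sum, Matrix.sum_mul, Matrix.mul_smul,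
    Matrix.smul_mul, smul_smul]
  refine Finset.sum_congr rfl fun a _ => Finset.sum_congr rfl fun a' _ =>
    Finset.sum_congr rfl fun b _ => Finset.sum_congr rfl fun b' _ =>
    Finset.sum_congr rfl fun c _ => Finset.sum_congr rfl fun c' _ => ?_
  rw [show (Msw A10 A11 A20 A21 A30 A31 a b c)ᴴ
      = pproj A10 a * (A11 ^ a.val * (pproj A20 b * (A21 ^ b.val *
          (pproj A30 c * A31 ^ c.val)))) by
    simp [Msw, conjTranspose_mul, conjTranspose_pow, h10.eq, h11.eq, h20.eq, h21.eq,
      h30.eq, h31.eq, pproj_herm h10, pproj_herm h20, pproj_herm h30, Matrix.mul_assoc]]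
  simp only [Msw, Matrix.mul_assoc, mul_one, one_mul, mul_assoc]

lemma pproj_add (A : Matrix ι ι ℂ) : pproj A 0 + pproj A 1 = 1 := by
  simp only [pproj, Fin.val_zero, Fin.val_one, pow_zero, pow_one, one_smul, neg_one_smul]
  module

lemma pproj_sub (A : Matrix ι ι ℂ) : pproj A 0 - pproj A 1 = A := by
  simp only [pproj, Fin.val_zero, Fin.val_one, pow_zero, pow_one, one_smul, neg_one_smul]
  module

lemma pproj_sq {A : Matrix ι ι ℂ} (hA : A * A = 1) (b : Fin 2) :
    pproj A b * pproj A b = pproj A b := by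
  fin_cases b <;>
  · simp only [pproj, Fin.val_zero, Fin.val_one, pow_zero, pow_one, one_smul, neg_one_smul,
      smul_mul_smul_comm, add_mul, mul_add, one_mul, mul_one, mul_neg, neg_mul, neg_neg, hA]
    module

variable (A B : Matrix ι ι ℂ)

lemma mid_one_X (X : Matrix ι ι ℂ) :
    mid A B 1 X = ∑ b : Fin 2, pproj A b * B ^ b.val * X * B ^ b.val * pproj A b := by
  simp [mid, Fin.sum_univ_two, Matrix.one_apply]

variable {A B}

lemma mid_one_one (hA : A * A = 1) (hB : B * B = 1) : mid A B 1 1 = 1 := by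
  rw [mid_one_X]
  simp only [Fin.sum_univ_two, Fin.val_zero, Fin.val_one, pow_zero, pow_one, mul_one, one_mul]
  rw [mul_assoc (pproj A 1) B B, hB, mul_one, pproj_sq hA, pproj_sq hA, pproj_add]

lemma mid_Z (hA : A * A = 1) (hB : B * B = 1) : mid A B sZ 1 = A := by
  simp only [mid, Fin.sum_univ_two, Fin.val_zero, Fin.val_one, pow_zero, pow_one, mul_one,
    one_mul, sZ, Matrix.cons_val', Matrix.cons_val_zero, Matrix.cons_val_one, Matrix.head_cons,
    Matrix.head_fin_const, Matrix.empty_val', Matrix.cons_val_fin_one, Matrix.of_apply,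
    one_smul, zero_smul, neg_smul, add_zero, zero_add]
  rw [mul_assoc (pproj A 1) B B, hB, mul_one, pproj_sq hA, pproj_sq hA, ← sub_eq_add_neg,
    pproj_sub]

lemma mid_X : mid A B sX 1 = ∑ b : Fin 2, pproj A b * B * pproj A (b + 1) := by
  simp only [mid, Fin.sum_univ_two, Fin.val_zero, Fin.val_one, pow_zero, pow_one, mul_one,
    one_mul, sX, Matrix.cons_val', Matrix.cons_val_zero, Matrix.cons_val_one, Matrix.head_cons,
    Matrix.head_fin_const, Matrix.empty_val', Matrix.cons_val_fin_one, Matrix.of_apply,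
    one_smul, zero_smul, neg_smul, add_zero, zero_add,
    show (0 + 1 : Fin 2) = 1 from rfl, show (1 + 1 : Fin 2) = 0 from rfl]

lemma mid_X' : mid A B sX 1 = ∑ b : Fin 2, pproj A (b + 1) * B * pproj A b := by
  rw [mid_X]
  simp only [Fin.sum_univ_two, show (0 + 1 : Fin 2) = 1 from rfl,
    show (1 + 1 : Fin 2) = 0 from rfl]
  exact add_comm _ _

lemma lift1_0 (W : Matrix (Fin 2) (Fin 2) ℂ) :
    lift1 (ι := ι) W 0
      = (W ⊗ₖ ((1 : Matrix (Fin 2) (Fin 2) ℂ) ⊗ₖ (1 : Matrix (Fin 2) (Fin 2) ℂ)))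
          ⊗ₖ (1 : Matrix ι ι ℂ) := by
  simp [lift1]

lemma lift1_1 (W : Matrix (Fin 2) (Fin 2) ℂ) :
    lift1 (ι := ι) W 1
      = ((1 : Matrix (Fin 2) (Fin 2) ℂ) ⊗ₖ (W ⊗ₖ (1 : Matrix (Fin 2) (Fin 2) ℂ)))
          ⊗ₖ (1 : Matrix ι ι ℂ) := by
  simp [lift1]

lemma lift1_2 (W : Matrix (Fin 2) (Fin 2) ℂ) :
    lift1 (ι := ι) W 2
      = ((1 : Matrix (Fin 2) (Fin 2) ℂ) ⊗ₖ ((1 : Matrix (Fin 2) (Fin 2) ℂ) ⊗ₖ W))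
          ⊗ₖ (1 : Matrix ι ι ℂ) := by
  simp [lift1]

end AUX

/-- Conjugating the six single-qubit Pauli operators on `(ℂ²)^{⊗3} ⊗ H` by the swap isometry. -/
theorem swapIso_conjugation
    {ι : Type*} [Fintype ι] [DecidableEq ι]
    (A10 A11 A20 A21 A30 A31 : Matrix ι ι ℂ)
    (h10 : A10.IsHermitian) (h10sq : A10 * A10 = 1)
    (h11 : A11.IsHermitian) (h11sq : A11 * A11 = 1)
    (h20 : A20.IsHermitian) (h20sq : A20 * A20 = 1)
    (h21 : A21.IsHermitian) (h21sq : A21 * A21 = 1)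
    (h30 : A30.IsHermitian) (h30sq : A30 * A30 = 1)
    (h31 : A31.IsHermitian) (h31sq : A31 * A31 = 1) :
    (swapIso A10 A11 A20 A21 A30 A31)ᴴ * lift1 (ι := ι) sZ 0 * swapIso A10 A11 A20 A21 A30 A31
        = A10 ∧
    (swapIso A10 A11 A20 A21 A30 A31)ᴴ * lift1 (ι := ι) sZ 1 * swapIso A10 A11 A20 A21 A30 A31
        = ∑ a : Fin 2, pproj A10 a * A11 ^ a.val * A20 * A11 ^ a.val * pproj A10 a ∧
    (swapIso A10 A11 A20 A21 A30 A31)ᴴ * lift1 (ι := ι) sZ 2 * swapIso A10 A11 A20 A21 A30 A31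
        = ∑ a : Fin 2, ∑ b : Fin 2,
            pproj A10 a * A11 ^ a.val * pproj A20 b * A21 ^ b.val * A30 * A21 ^ b.val *
              pproj A20 b * A11 ^ a.val * pproj A10 a ∧
    (swapIso A10 A11 A20 A21 A30 A31)ᴴ * lift1 (ι := ι) sX 0 * swapIso A10 A11 A20 A21 A30 A31
        = ∑ a : Fin 2, pproj A10 (a + 1) * A11 * pproj A10 a ∧
    (swapIso A10 A11 A20 A21 A30 A31)ᴴ * lift1 (ι := ι) sX 1 * swapIso A10 A11 A20 A21 A30 A31
        = ∑ a : Fin 2, ∑ b : Fin 2,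
            pproj A10 a * A11 ^ a.val * pproj A20 b * A21 * pproj A20 (b + 1) *
              A11 ^ a.val * pproj A10 a ∧
    (swapIso A10 A11 A20 A21 A30 A31)ᴴ * lift1 (ι := ι) sX 2 * swapIso A10 A11 A20 A21 A30 A31
        = ∑ a : Fin 2, ∑ b : Fin 2, ∑ c : Fin 2,
            pproj A10 a * A11 ^ a.val * pproj A20 b * A21 ^ b.val * pproj A30 (c + 1) *
              A31 * pproj A30 c * A21 ^ b.val * pproj A20 b * A11 ^ a.val * pproj A10 a := by
  refine ⟨?_, ?_, ?_, ?_, ?_, ?_⟩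
  · rw [lift1_0, key A10 A11 A20 A21 A30 A31 sZ 1 1, reorder6,
      regroup h10 h11 h20 h21 h30 h31, mid_one_one h30sq h31sq, mid_one_one h20sq h21sq,
      mid_Z h10sq h11sq]
  · rw [lift1_1, key A10 A11 A20 A21 A30 A31 1 sZ 1, reorder6,
      regroup h10 h11 h20 h21 h30 h31, mid_one_one h30sq h31sq, mid_Z h20sq h21sq,
      mid_one_X A10 A11 A20]
  · rw [lift1_2, key A10 A11 A20 A21 A30 A31 1 1 sZ, reorder6,
      regroup h10 h11 h20 h21 h30 h31, mid_Z h30sq h31sq, mid_one_X A20 A21 A30,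
      mid_one_X A10 A11]
    simp only [Matrix.mul_sum, Matrix.sum_mul]
    exact Finset.sum_congr rfl fun a _ => Finset.sum_congr rfl fun b _ => by
      simp only [mul_assoc]
  · rw [lift1_0, key A10 A11 A20 A21 A30 A31 sX 1 1, reorder6,
      regroup h10 h11 h20 h21 h30 h31, mid_one_one h30sq h31sq, mid_one_one h20sq h21sq,
      mid_X']
  · rw [lift1_1, key A10 A11 A20 A21 A30 A31 1 sX 1, reorder6,
      regroup h10 h11 h20 h21 h30 h31, mid_one_one h30sq h31sq, mid_X,
      mid_one_X A10 A11]
    simp only [Matrix.mul_sum, Matrix.sum_mul]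
    exact Finset.sum_congr rfl fun a _ => Finset.sum_congr rfl fun b _ => by
      simp only [mul_assoc]
  · rw [lift1_2, key A10 A11 A20 A21 A30 A31 1 1 sX, reorder6,
      regroup h10 h11 h20 h21 h30 h31, mid_X', mid_one_X A20 A21, mid_one_X A10 A11]
    simp only [Matrix.mul_sum, Matrix.sum_mul]
    exact Finset.sum_congr rfl fun a _ => Finset.sum_congr rfl fun b _ =>
      Finset.sum_congr rfl fun c _ => by simp only [mul_assoc]
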